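/- arXiv:2304.11551 — 3 statements merged into one kernel-verified Lean document; each statement's English description precedes it below -/
import Mathlib

section
/- Let a > 1 and let B denote the Segal-Bargmann transform B(φ)(z) = π^{-1/4} ∫_ℝ exp(-(z²+x²)/2 + √2 z x) φ(x) dx. Then for F̃ₙ(x,a) = e^{-x²/2} Fₙ(x,a) one has B(F̃ₙ)(z) = π^{1/4} Σ_{j=0}^{n} Cⱼ(n,a) exp( (iz/√2)(1-2j/n) - (1/4)(1-2j/n)² ) for all z ∈ ℂ. -/
open Complex Finset MeasureTheory Real

noncomputable def Ccoef (n j : ℕ) (a : ℝ) : ℂ :=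
  (n.choose j : ℂ) * (((1 + a) / 2 : ℝ) : ℂ) ^ (n - j) * (((1 - a) / 2 : ℝ) : ℂ) ^ j

noncomputable def Fseq (n : ℕ) (a x : ℝ) : ℂ :=
  ∑ j ∈ Finset.range (n + 1),
    Ccoef n j a * Complex.exp (Complex.I * ((1 : ℂ) - 2 * (j : ℂ) / (n : ℂ)) * (x : ℂ))

noncomputable def Ftil (n : ℕ) (a x : ℝ) : ℂ :=
  (Real.exp (-x ^ 2 / 2) : ℂ) * Fseq n a x

noncomputable def Bargmann (φ : ℝ → ℂ) (z : ℂ) : ℂ :=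
  (Complex.ofReal (π ^ (-(1 / 4 : ℝ)))) *
    ∫ x : ℝ, Complex.exp (-(z ^ 2 + (x : ℂ) ^ 2) / 2 + (Real.sqrt 2 : ℂ) * z * (x : ℂ)) * φ x

theorem bargmann_Ftil (a : ℝ) (ha : 1 < a) (n : ℕ) (hn : 1 ≤ n) (z : ℂ) :
    Bargmann (fun x => Ftil n a x) z =
      (Complex.ofReal (π ^ ((1 / 4 : ℝ)))) *
        ∑ j ∈ Finset.range (n + 1),
          Ccoef n j a *
            Complex.exp (Complex.I * z / (Real.sqrt 2 : ℂ) * ((1 : ℂ) - 2 * (j : ℂ) / (n : ℂ)) -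
              ((1 : ℂ) - 2 * (j : ℂ) / (n : ℂ)) ^ 2 / 4) := by
  have hs2 : ((Real.sqrt 2 : ℝ) : ℂ) ^ 2 = 2 := by
    rw [← Complex.ofReal_pow, Real.sq_sqrt (by norm_num : (2:ℝ) ≥ 0)]
    norm_num
  have hs2ne : ((Real.sqrt 2 : ℝ) : ℂ) ≠ 0 := by
    simp [Real.sqrt_eq_zero']
  set β : ℕ → ℂ := fun j => (1 : ℂ) - 2 * (j : ℂ) / (n : ℂ) with hβ
  have key : ∀ x : ℝ,
      Complex.exp (-(z ^ 2 + (x : ℂ) ^ 2) / 2 + (Real.sqrt 2 : ℂ) * z * (x : ℂ)) * Ftil n a x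
      = ∑ j ∈ Finset.range (n + 1), Ccoef n j a *
          Complex.exp ((-1 : ℂ) * (x:ℂ) ^ 2 +
            ((Real.sqrt 2 : ℂ) * z + Complex.I * β j) * (x:ℂ) + (-(z^2)/2)) := by
    intro x
    simp only [Ftil, Fseq, Finset.mul_sum]
    refine Finset.sum_congr rfl fun j _ => ?_
    rw [show ((Real.exp (-x ^ 2 / 2) : ℝ) : ℂ) = Complex.exp (-(x:ℂ)^2/2) by
      rw [Complex.ofReal_exp]; norm_cast]
    rw [mul_left_comm (Complex.exp (-(x:ℂ)^2/2)),
      mul_left_comm (Complex.exp (-(z ^ 2 + (x : ℂ) ^ 2) / 2 + (Real.sqrt 2 : ℂ) * z * (x : ℂ))),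
      ← Complex.exp_add, ← Complex.exp_add]
    congr 2
    ring
  have hint : ∀ j ∈ Finset.range (n+1), Integrable (fun x : ℝ =>
      Ccoef n j a * Complex.exp ((-1 : ℂ) * (x:ℂ) ^ 2 +
        ((Real.sqrt 2 : ℂ) * z + Complex.I * β j) * (x:ℂ) + (-(z^2)/2))) := by
    intro j _
    exact (integrable_cexp_quadratic' (by norm_num) _ _).const_mul _
  have hI : (∫ x : ℝ,
      Complex.exp (-(z ^ 2 + (x : ℂ) ^ 2) / 2 + (Real.sqrt 2 : ℂ) * z * (x : ℂ)) * Ftil n a x)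
      = ∑ j ∈ Finset.range (n + 1), Ccoef n j a *
          ((π / -(-1 : ℂ)) ^ (1 / 2 : ℂ) *
            Complex.exp (-(z^2)/2 - ((Real.sqrt 2 : ℂ) * z + Complex.I * β j)^2 / (4 * (-1)))) := by
    simp_rw [key]
    rw [integral_finset_sum _ hint]
    refine Finset.sum_congr rfl fun j _ => ?_
    rw [integral_const_mul, integral_cexp_quadratic (by norm_num : (-1:ℂ).re < 0)]
  rw [Bargmann, hI]
  have hpow : (π / -(-1 : ℂ)) ^ (1 / 2 : ℂ) = ((π ^ ((1:ℝ)/2) : ℝ) : ℂ) := by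
    rw [neg_neg, div_one, show (1/2:ℂ) = ((1/2:ℝ):ℂ) by norm_num,
      ← Complex.ofReal_cpow Real.pi_pos.le]
  rw [hpow, Finset.mul_sum, Finset.mul_sum]
  refine Finset.sum_congr rfl fun j _ => ?_
  have hpi : (Complex.ofReal (π ^ (-(1 / 4 : ℝ)))) * ((π ^ ((1:ℝ)/2) : ℝ) : ℂ)
      = (Complex.ofReal (π ^ ((1 / 4 : ℝ)))) := by
    rw [← Complex.ofReal_mul, ← Real.rpow_add Real.pi_pos]
    norm_num
  have hexp : Complex.exp (-(z^2)/2 - ((Real.sqrt 2 : ℂ) * z + Complex.I * β j)^2 / (4 * (-1)))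
      = Complex.exp (Complex.I * z / (Real.sqrt 2 : ℂ) * β j - β j ^ 2 / 4) := by
    congr 1
    have h1 : ((Real.sqrt 2 : ℝ) : ℂ) * ((Real.sqrt 2 : ℝ) : ℂ)⁻¹ = 1 := mul_inv_cancel₀ hs2ne
    linear_combination (z^2/4 + z*Complex.I*(β j)*((Real.sqrt 2:ℝ):ℂ)⁻¹/2) * hs2
      - z*Complex.I*(β j)*((Real.sqrt 2:ℝ):ℂ)/2 * h1 + (β j)^2/4*Complex.I_sq
  rw [hexp]
  linear_combination (Ccoef n j a *
    Complex.exp (Complex.I * z / (Real.sqrt 2 : ℂ) * β j - β j ^ 2 / 4)) * hpi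
end

section
/- For a > 1 and every z ∈ ℂ, lim_{n→∞} Σ_{j=0}^{n} Cⱼ(n,a) exp( (iz/√2)(1-2j/n) - (1/4)(1-2j/n)² ) = exp( iza/√2 - a²/4 ). -/
open Complex Finset Filter Real

open MeasureTheory Topology


lemma aux_pow_tendsto (x : ℂ) (v : ℕ → ℂ)
    (hv : Tendsto (fun n : ℕ => (n:ℂ) * v n) atTop (𝓝 x)) :
    Tendsto (fun n : ℕ => (1 + v n) ^ n) atTop (𝓝 (Complex.exp x)) := by
  have hinv : Tendsto (fun n : ℕ => ((n:ℂ))⁻¹) atTop (𝓝 0) := by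
    have h1 : Tendsto (fun n : ℕ => (n:ℝ)⁻¹) atTop (𝓝 0) :=
      tendsto_inv_atTop_zero.comp tendsto_natCast_atTop_atTop
    have h2 := (Complex.continuous_ofReal.tendsto 0).comp h1
    rw [Complex.ofReal_zero] at h2
    exact h2.congr (fun n => by simp [Function.comp])
  have hv0 : Tendsto v atTop (𝓝 0) := by
    have h := hv.mul hinv
    rw [mul_zero] at h
    apply h.congr'
    filter_upwards [eventually_ge_atTop 1] with n hn
    have : (n:ℂ) ≠ 0 := Nat.cast_ne_zero.mpr (by omega)
    field_simp
  have hsmall : ∀ᶠ n in atTop, ‖v n‖ ≤ 1/2 := by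
    have := hv0.norm
    simp only [norm_zero] at this
    exact this.eventually_le_const (by norm_num)
  -- n * log (1 + v n) → x
  have hlog : Tendsto (fun n : ℕ => (n:ℂ) * Complex.log (1 + v n)) atTop (𝓝 x) := by
    have hdiff : Tendsto (fun n : ℕ => (n:ℂ) * (Complex.log (1 + v n) - v n)) atTop (𝓝 0) := by
      apply squeeze_zero_norm' (a := fun n : ℕ => ‖(n:ℂ) * v n‖ * ‖v n‖)
      · filter_upwards [hsmall] with n hn
        have h1 : ‖v n‖ < 1 := lt_of_le_of_lt hn (by norm_num)
        have h2 : ‖Complex.log (1 + v n) - v n‖ ≤ ‖v n‖^2 * (1 - ‖v n‖)⁻¹ / 2 :=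
          Complex.norm_log_one_add_sub_self_le h1
        have h3 : (1 - ‖v n‖)⁻¹ ≤ 2 := by
          rw [inv_le_comm₀ (by linarith) (by norm_num)]
          linarith
        have h4 : ‖Complex.log (1 + v n) - v n‖ ≤ ‖v n‖^2 := by
          calc ‖Complex.log (1 + v n) - v n‖ ≤ ‖v n‖^2 * (1 - ‖v n‖)⁻¹ / 2 := h2
            _ ≤ ‖v n‖^2 * 2 / 2 := by gcongr
            _ = ‖v n‖^2 := by ring
        rw [norm_mul]
        calc ‖(n:ℂ)‖ * ‖Complex.log (1 + v n) - v n‖ ≤ ‖(n:ℂ)‖ * ‖v n‖^2 := by gcongr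
          _ = ‖(n:ℂ) * v n‖ * ‖v n‖ := by rw [norm_mul]; ring
      · have := (hv.norm).mul (hv0.norm)
        simpa using this
    have h := hv.add hdiff
    rw [add_zero] at h
    apply h.congr
    intro n
    ring
  have hexp := (Complex.continuous_exp.tendsto x).comp hlog
  apply hexp.congr'
  filter_upwards [hsmall] with n hn
  have hne : (1 : ℂ) + v n ≠ 0 := by
    intro h
    have : ‖(1:ℂ) + v n‖ = 0 := by rw [h, norm_zero]
    have h2 : (1:ℝ) ≤ ‖(1:ℂ) + v n‖ + ‖v n‖ := by
      have := norm_sub_le ((1:ℂ) + v n) (v n)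
      simpa using this
    rw [this] at h2
    linarith
  simp only [Function.comp_apply]
  rw [Complex.exp_nat_mul, Complex.exp_log hne]


lemma aux_exp_lim (w : ℂ) :
    Tendsto (fun n : ℕ => (n:ℂ) * (Complex.exp (-(2*w)/n) - 1)) atTop (𝓝 (-(2*w))) := by
  rw [← tendsto_sub_nhds_zero_iff]
  apply squeeze_zero_norm' (a := fun n : ℕ => 4 * ‖w‖^2 / n)
  · filter_upwards [eventually_ge_atTop (Nat.ceil (2 * ‖w‖) + 1)] with n hn
    have hn1 : 1 ≤ n := le_trans (by omega) hn
    have hnc : (n:ℂ) ≠ 0 := Nat.cast_ne_zero.mpr (by omega)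
    have hnr : (0:ℝ) < n := by positivity
    have hu : ‖-(2*w)/(n:ℂ)‖ = 2 * ‖w‖ / n := by
      rw [norm_div, norm_neg, norm_mul]
      simp
    have hle : ‖-(2*w)/(n:ℂ)‖ ≤ 1 := by
      rw [hu, div_le_one hnr]
      calc 2 * ‖w‖ ≤ (Nat.ceil (2 * ‖w‖) : ℝ) := Nat.le_ceil _
        _ ≤ n := by exact_mod_cast le_trans (by omega) hn
    have key := Complex.norm_exp_sub_one_sub_id_le (x := -(2*w)/n) (by simpa using hle)
    have heq : (n:ℂ) * (Complex.exp (-(2*w)/n) - 1) - (-(2*w))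
        = (n:ℂ) * (Complex.exp (-(2*w)/n) - 1 - (-(2*w)/n)) := by
      field_simp
    rw [heq, norm_mul]
    have : ‖Complex.exp (-(2*w)/(n:ℂ)) - 1 - (-(2*w)/(n:ℂ))‖ ≤ ‖-(2*w)/(n:ℂ)‖^2 := by
      simpa using key
    calc ‖(n:ℂ)‖ * ‖Complex.exp (-(2*w)/n) - 1 - (-(2*w)/n)‖
        ≤ (n:ℝ) * ‖-(2*w)/(n:ℂ)‖^2 := by
          rw [Complex.norm_natCast]; gcongr
      _ = 4 * ‖w‖^2 / n := by
          rw [hu]; field_simp; ring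
  · have : Tendsto (fun n : ℕ => (n:ℝ)⁻¹) atTop (𝓝 0) :=
      tendsto_inv_atTop_zero.comp tendsto_natCast_atTop_atTop
    have h2 := this.const_mul (4 * ‖w‖^2)
    rw [mul_zero] at h2
    exact h2.congr (fun n => by rw [div_eq_mul_inv])

lemma gauss_int (c t : ℂ) :
    ∫ s : ℝ, Complex.exp ((-1 : ℂ) * (s:ℂ)^2 + (Complex.I*t) * s + c*t)
      = (Real.sqrt π : ℂ) * Complex.exp (c*t - t^2/4) := by
  rw [integral_cexp_quadratic (by norm_num) (Complex.I*t) (c*t)]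
  congr 1
  · rw [show ((π : ℂ) / -(-1)) = ((π : ℝ) : ℂ) by ring]
    rw [show ((1:ℂ)/2) = ((1/2 : ℝ) : ℂ) by norm_num]
    rw [← Complex.ofReal_cpow Real.pi_pos.le, Real.sqrt_eq_rpow]
  · congr 1
    ring_nf
    rw [Complex.I_sq]
    ring

lemma binom_sum (a : ℝ) (n : ℕ) (w : ℂ) :
    ∑ j ∈ Finset.range (n+1), Ccoef n j a * Complex.exp (w * ((1:ℂ) - 2*(j:ℂ)/(n:ℂ)))
      = Complex.exp w *
        ((((1+a)/2 : ℝ):ℂ) + (((1-a)/2 : ℝ):ℂ) * Complex.exp (-(2*w)/n)) ^ n := by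
  set P : ℂ := (((1+a)/2 : ℝ):ℂ)
  set Q : ℂ := (((1-a)/2 : ℝ):ℂ)
  set E : ℂ := Complex.exp (-(2*w)/n)
  have hterm : ∀ j ∈ Finset.range (n+1),
      Ccoef n j a * Complex.exp (w * ((1:ℂ) - 2*(j:ℂ)/(n:ℂ)))
        = Complex.exp w * ((Q * E) ^ j * P ^ (n-j) * (n.choose j : ℂ)) := by
    intro j _
    have h1 : w * ((1:ℂ) - 2*(j:ℂ)/(n:ℂ)) = w + (j:ℂ) * (-(2*w)/n) := by
      field_simp
      ring
    rw [h1, Complex.exp_add, Complex.exp_nat_mul]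
    show Ccoef n j a * (Complex.exp w * E ^ j) = _
    rw [Ccoef, mul_pow]
    ring
  rw [Finset.sum_congr rfl hterm, ← Finset.mul_sum, ← add_pow, add_comm (Q*E) P]

lemma step_B (a : ℝ) (c : ℂ) (n : ℕ) :
    ∑ j ∈ Finset.range (n+1),
        Ccoef n j a * Complex.exp (c * ((1:ℂ) - 2*(j:ℂ)/(n:ℂ)) - ((1:ℂ) - 2*(j:ℂ)/(n:ℂ))^2/4)
      = ((Real.sqrt π : ℂ))⁻¹ * ∫ s : ℝ,
          Complex.exp (-(s:ℂ)^2) * (Complex.exp (c + Complex.I*s) *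
            ((((1+a)/2:ℝ):ℂ) + (((1-a)/2:ℝ):ℂ) * Complex.exp (-(2*(c + Complex.I*s))/n)) ^ n) := by
  have hpi : ((Real.sqrt π : ℝ):ℂ) ≠ 0 := by
    simp [Real.sqrt_eq_zero', Real.pi_pos.le]
  have h1 : ∀ j ∈ Finset.range (n+1),
      Ccoef n j a * Complex.exp (c * ((1:ℂ) - 2*(j:ℂ)/(n:ℂ)) - ((1:ℂ) - 2*(j:ℂ)/(n:ℂ))^2/4)
        = ((Real.sqrt π : ℂ))⁻¹ * ∫ s : ℝ, Ccoef n j a *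
            Complex.exp ((-1 : ℂ) * (s:ℂ)^2 + (Complex.I*((1:ℂ) - 2*(j:ℂ)/(n:ℂ))) * s
              + c*((1:ℂ) - 2*(j:ℂ)/(n:ℂ))) := by
    intro j _
    rw [MeasureTheory.integral_const_mul, gauss_int c ((1:ℂ) - 2*(j:ℂ)/(n:ℂ))]
    rw [show ((Real.sqrt π : ℂ))⁻¹ * (Ccoef n j a * ((Real.sqrt π : ℂ) *
        Complex.exp (c*((1:ℂ) - 2*(j:ℂ)/(n:ℂ)) - ((1:ℂ) - 2*(j:ℂ)/(n:ℂ))^2/4)))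
      = ((Real.sqrt π : ℂ))⁻¹ * (Real.sqrt π : ℂ) * (Ccoef n j a *
        Complex.exp (c*((1:ℂ) - 2*(j:ℂ)/(n:ℂ)) - ((1:ℂ) - 2*(j:ℂ)/(n:ℂ))^2/4)) by ring]
    rw [inv_mul_cancel₀ hpi, one_mul]
  rw [Finset.sum_congr rfl h1, ← Finset.mul_sum]
  congr 1
  rw [← MeasureTheory.integral_finset_sum]
  · congr 1
    funext s
    have h2 : ∀ j ∈ Finset.range (n+1),
        Ccoef n j a * Complex.exp ((-1 : ℂ) * (s:ℂ)^2
            + (Complex.I*((1:ℂ) - 2*(j:ℂ)/(n:ℂ))) * s + c*((1:ℂ) - 2*(j:ℂ)/(n:ℂ)))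
          = Complex.exp (-(s:ℂ)^2) *
            (Ccoef n j a * Complex.exp ((c + Complex.I*s) * ((1:ℂ) - 2*(j:ℂ)/(n:ℂ)))) := by
      intro j _
      rw [show ((-1 : ℂ) * (s:ℂ)^2 + (Complex.I*((1:ℂ) - 2*(j:ℂ)/(n:ℂ))) * s
            + c*((1:ℂ) - 2*(j:ℂ)/(n:ℂ)))
          = (-(s:ℂ)^2) + ((c + Complex.I*s) * ((1:ℂ) - 2*(j:ℂ)/(n:ℂ))) by ring]
      rw [Complex.exp_add]
      ring
    rw [Finset.sum_congr rfl h2, ← Finset.mul_sum, binom_sum a n (c + Complex.I*s)]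
  · intro j _
    exact (integrable_cexp_quadratic' (by norm_num : ((-1:ℂ)).re < 0) _ _).const_mul _

set_option maxHeartbeats 1000000 in
lemma step_C (a : ℝ) (ha : 1 < a) (c : ℂ) :
    Tendsto (fun n : ℕ => ∫ s : ℝ,
        Complex.exp (-(s:ℂ)^2) * (Complex.exp (c + Complex.I*s) *
          ((((1+a)/2:ℝ):ℂ) + (((1-a)/2:ℝ):ℂ) * Complex.exp (-(2*(c + Complex.I*s))/n)) ^ n))
      atTop
      (𝓝 (∫ s : ℝ, Complex.exp ((-1:ℂ) * (s:ℂ)^2 + (Complex.I*(a:ℂ)) * s + c*(a:ℂ)))) := by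
  set Qr : ℝ := (1-a)/2 with hQr
  set C₁ : ℝ := 3 + Real.exp (2*|c.re|) with hC₁
  set D : ℝ := 2 * |Qr| * C₁ with hD
  set K : ℝ := |c.re| + D * ‖c‖ + D^2/2 with hK
  have hC₁pos : 0 < C₁ := by positivity
  have hDpos : 0 ≤ D := by positivity
  have hPQ : ((((1+a)/2:ℝ)):ℂ) + (((1-a)/2:ℝ):ℂ) = 1 := by push_cast; ring
  apply MeasureTheory.tendsto_integral_filter_of_dominated_convergence
    (bound := fun s : ℝ => Real.exp K * Real.exp (-(1/2) * s^2))
  · -- measurability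
    filter_upwards with n
    apply Continuous.aestronglyMeasurable
    fun_prop
  · -- bound
    filter_upwards [eventually_ge_atTop 1] with n hn
    filter_upwards with s
    have hnr : (1:ℝ) ≤ (n:ℝ) := by exact_mod_cast hn
    have hnr0 : (0:ℝ) < (n:ℝ) := by linarith
    set w : ℂ := c + Complex.I * s with hw
    have hwre : w.re = c.re := by simp [hw]
    have hwnorm : ‖w‖ ≤ ‖c‖ + |s| := by
      calc ‖w‖ ≤ ‖c‖ + ‖Complex.I * (s:ℂ)‖ := norm_add_le _ _
        _ = ‖c‖ + |s| := by simp
    set u : ℂ := -(2*w)/(n:ℂ) with hu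
    have hunorm : ‖u‖ = 2 * ‖w‖ / n := by
      rw [hu, norm_div, norm_neg, norm_mul]
      simp
    have hure : u.re = (-2/n) * c.re := by
      have : u = ((-2/n : ℝ):ℂ) * w := by
        rw [hu]
        push_cast
        field_simp
      rw [this, Complex.re_ofReal_mul, hwre]
    have hE : ‖Complex.exp u - 1‖ ≤ C₁ * ‖u‖ := by
      by_cases hcase : ‖u‖ ≤ 1
      · have h2 := Complex.norm_exp_sub_one_le (x := u) hcase
        calc ‖Complex.exp u - 1‖ ≤ 2 * ‖u‖ := h2
          _ ≤ C₁ * ‖u‖ := by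
              apply mul_le_mul_of_nonneg_right _ (norm_nonneg _)
              rw [hC₁]
              linarith [Real.exp_pos (2*|c.re|)]
      · push_neg at hcase
        have h1 : ‖Complex.exp u - 1‖ ≤ Real.exp u.re + 1 := by
          calc ‖Complex.exp u - 1‖ ≤ ‖Complex.exp u‖ + ‖(1:ℂ)‖ := norm_sub_le _ _
            _ = Real.exp u.re + 1 := by rw [Complex.norm_exp, norm_one]
        have h2 : Real.exp u.re ≤ Real.exp (2*|c.re|) := by
          apply Real.exp_le_exp.mpr
          rw [hure]
          calc (-2/n) * c.re ≤ |(-2/n) * c.re| := le_abs_self _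
            _ = (2/n) * |c.re| := by rw [abs_mul]; congr 1; rw [abs_div]; simp
            _ ≤ 2 * |c.re| := by
                apply mul_le_mul_of_nonneg_right _ (abs_nonneg _)
                rw [div_le_iff₀ hnr0]
                nlinarith
        calc ‖Complex.exp u - 1‖ ≤ Real.exp (2*|c.re|) + 1 := by linarith
          _ ≤ C₁ := by rw [hC₁]; linarith
          _ ≤ C₁ * ‖u‖ := by nlinarith
    have hPQE : ‖(((1+a)/2:ℝ):ℂ) + (((1-a)/2:ℝ):ℂ) * Complex.exp u‖
        ≤ Real.exp (D * ‖w‖ / n) := by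
      have heq : (((1+a)/2:ℝ):ℂ) + (((1-a)/2:ℝ):ℂ) * Complex.exp u
          = 1 + ((Qr:ℝ):ℂ) * (Complex.exp u - 1) := by
        rw [hQr]
        push_cast
        ring
      rw [heq]
      calc ‖(1:ℂ) + ((Qr:ℝ):ℂ) * (Complex.exp u - 1)‖
          ≤ ‖(1:ℂ)‖ + ‖((Qr:ℝ):ℂ) * (Complex.exp u - 1)‖ := norm_add_le _ _
        _ = 1 + |Qr| * ‖Complex.exp u - 1‖ := by
            rw [norm_one, norm_mul, Complex.norm_real, Real.norm_eq_abs]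
        _ ≤ 1 + |Qr| * (C₁ * ‖u‖) := by
            gcongr
        _ = 1 + D * ‖w‖ / n := by rw [hD, hunorm]; ring
        _ ≤ Real.exp (D * ‖w‖ / n) := by
            have := Real.add_one_le_exp (D * ‖w‖ / n)
            linarith
    have hpow : ‖((((1+a)/2:ℝ):ℂ) + (((1-a)/2:ℝ):ℂ) * Complex.exp u) ^ n‖
        ≤ Real.exp (D * ‖w‖) := by
      rw [norm_pow]
      calc ‖(((1+a)/2:ℝ):ℂ) + (((1-a)/2:ℝ):ℂ) * Complex.exp u‖ ^ n
          ≤ Real.exp (D * ‖w‖ / n) ^ n := pow_le_pow_left₀ (norm_nonneg _) hPQE n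
        _ = Real.exp ((n:ℝ) * (D * ‖w‖ / n)) := by rw [← Real.exp_nat_mul]
        _ = Real.exp (D * ‖w‖) := by
            congr 1
            field_simp
    rw [norm_mul, norm_mul, Complex.norm_exp,
      Complex.norm_exp]
    have h3 : (-(s:ℂ)^2).re = -s^2 := by
      rw [← Complex.ofReal_pow, ← Complex.ofReal_neg, Complex.ofReal_re]
    have h4 : (c + Complex.I * s).re = c.re := by simp
    rw [h3, h4]
    calc Real.exp (-s^2) * (Real.exp c.re * ‖((((1+a)/2:ℝ):ℂ) + (((1-a)/2:ℝ):ℂ) * Complex.exp u) ^ n‖)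
        ≤ Real.exp (-s^2) * (Real.exp c.re * Real.exp (D * ‖w‖)) := by
          gcongr
      _ = Real.exp (-s^2 + c.re + D * ‖w‖) := by
          rw [← Real.exp_add, ← Real.exp_add]
          congr 1
          ring
      _ ≤ Real.exp K * Real.exp (-(1/2) * s^2) := by
          rw [← Real.exp_add]
          apply Real.exp_le_exp.mpr
          have h5 : D * ‖w‖ ≤ D * (‖c‖ + |s|) := by gcongr
          have h6 : D * |s| ≤ s^2/2 + D^2/2 := by
            nlinarith [sq_nonneg (|s| - D), _root_.sq_abs s]
          have h7 : c.re ≤ |c.re| := le_abs_self _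
          rw [hK]
          nlinarith
  · -- integrability of bound
    exact (integrable_exp_neg_mul_sq (by norm_num : (0:ℝ) < 1/2)).const_mul (Real.exp K)
  · -- pointwise limit
    filter_upwards with s
    set w : ℂ := c + Complex.I * s with hw
    set v : ℕ → ℂ := fun n => (((1-a)/2:ℝ):ℂ) * (Complex.exp (-(2*w)/n) - 1) with hv
    have hvlim : Tendsto (fun n : ℕ => (n:ℂ) * v n) atTop
        (𝓝 ((((1-a)/2:ℝ):ℂ) * (-(2*w)))) := by
      have := (aux_exp_lim w).const_mul ((((1-a)/2:ℝ):ℂ))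
      apply this.congr
      intro n
      rw [hv]
      ring
    have hpow := aux_pow_tendsto _ _ hvlim
    have hmain : Tendsto (fun n : ℕ =>
        Complex.exp (-(s:ℂ)^2) * (Complex.exp w * (1 + v n) ^ n)) atTop
        (𝓝 (Complex.exp (-(s:ℂ)^2) * (Complex.exp w *
          Complex.exp ((((1-a)/2:ℝ):ℂ) * (-(2*w)))))) := by
      exact (hpow.const_mul _).const_mul _
    have heq2 : Complex.exp (-(s:ℂ)^2) * (Complex.exp w *
          Complex.exp ((((1-a)/2:ℝ):ℂ) * (-(2*w))))
        = Complex.exp ((-1:ℂ) * (s:ℂ)^2 + (Complex.I*(a:ℂ)) * s + c*(a:ℂ)) := by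
      rw [← Complex.exp_add, ← Complex.exp_add]
      congr 1
      have hQ : (1:ℂ) - 2 * (((1-a)/2:ℝ):ℂ) = (a:ℂ) := by push_cast; ring
      rw [hw]
      linear_combination (c + Complex.I * s) * hQ
    rw [← heq2]
    apply hmain.congr
    intro n
    congr 2
    have : (((1+a)/2:ℝ):ℂ) + (((1-a)/2:ℝ):ℂ) * Complex.exp (-(2*w)/n) = 1 + v n := by
      rw [hv]
      push_cast
      ring
    rw [← this, hw]


theorem coherent_states_limit (a : ℝ) (ha : 1 < a) (z : ℂ) :
    Tendsto (fun n : ℕ =>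
        ∑ j ∈ Finset.range (n + 1),
          Ccoef n j a *
            Complex.exp (Complex.I * z / (Real.sqrt 2 : ℂ) * ((1 : ℂ) - 2 * (j : ℂ) / (n : ℂ)) -
              ((1 : ℂ) - 2 * (j : ℂ) / (n : ℂ)) ^ 2 / 4))
      atTop
      (nhds (Complex.exp (Complex.I * z * (a : ℂ) / (Real.sqrt 2 : ℂ) - (a : ℂ) ^ 2 / 4))) := by
  set c : ℂ := Complex.I * z / (Real.sqrt 2 : ℂ) with hc
  have hpi : ((Real.sqrt π : ℝ):ℂ) ≠ 0 := by
    simp [Real.sqrt_eq_zero', Real.pi_pos.le]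
  have h1 := (step_C a ha c).const_mul (((Real.sqrt π : ℝ):ℂ))⁻¹
  have h2 : (((Real.sqrt π : ℝ):ℂ))⁻¹ *
      (∫ s : ℝ, Complex.exp ((-1:ℂ) * (s:ℂ)^2 + (Complex.I*(a:ℂ)) * s + c*(a:ℂ)))
      = Complex.exp (Complex.I * z * (a : ℂ) / (Real.sqrt 2 : ℂ) - (a : ℂ) ^ 2 / 4) := by
    rw [gauss_int c (a:ℂ), ← mul_assoc, inv_mul_cancel₀ hpi, one_mul]
    congr 1
    rw [hc]
    ring
  rw [h2] at h1
  apply h1.congr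
  intro n
  rw [step_B a c n]
end

section
/- For a > 1, lim_{n→∞} Σ_{j=0}^{n} Cⱼ(n,a) exp( λ(1-2j/n) - (1-2j/n)²/2 ) = exp( -a²/2 + aλ ) for every real λ; in particular Σ_{j=0}^{n} Cⱼ(n,a) exp(-(1-2j/n)²/2) → e^{-a²/2} as n → ∞. -/
open Complex Finset Filter Real

noncomputable def Mm (a : ℝ) (n k : ℕ) : ℝ :=
  ∑ j ∈ range (n+1), (n.choose j : ℝ) * ((1+a)/2)^(n-j) * ((1-a)/2)^j * ((n:ℝ) - 2*j)^k

lemma binom_step (p q : ℝ) (n : ℕ) (g : ℕ → ℝ) :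
    ∑ j ∈ range (n+2), ((n+1).choose j : ℝ) * p^(n+1-j) * q^j * g j
      = p * ∑ j ∈ range (n+1), (n.choose j : ℝ) * p^(n-j) * q^j * g j
        + q * ∑ j ∈ range (n+1), (n.choose j : ℝ) * p^(n-j) * q^j * g (j+1) := by
  have h1 : ∑ j ∈ range (n+2), ((n+1).choose j : ℝ) * p^(n+1-j) * q^j * g j
      = (∑ j ∈ range (n+1), ((n+1).choose (j+1) : ℝ) * p^(n+1-(j+1)) * q^(j+1) * g (j+1))
        + ((n+1).choose 0 : ℝ) * p^(n+1-0) * q^0 * g 0 :=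
    Finset.sum_range_succ' _ (n+1)
  have h2 : ∀ j ∈ range (n+1), ((n+1).choose (j+1) : ℝ) * p^(n+1-(j+1)) * q^(j+1) * g (j+1)
      = q * ((n.choose j : ℝ) * p^(n-j) * q^j * g (j+1))
        + (n.choose (j+1) : ℝ) * p^(n-j) * q^(j+1) * g (j+1) := by
    intro j hj
    rw [Nat.choose_succ_succ]
    push_cast
    ring
  rw [h1, Finset.sum_congr rfl h2, Finset.sum_add_distrib, ← Finset.mul_sum]
  have h3 : ∑ j ∈ range (n+1), (n.choose (j+1) : ℝ) * p^(n-j) * q^(j+1) * g (j+1)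
      = (∑ j ∈ range (n+2), (n.choose j : ℝ) * p^(n+1-j) * q^j * g j)
        - (n.choose 0 : ℝ) * p^(n+1-0) * q^0 * g 0 := by
    have := Finset.sum_range_succ' (fun j => (n.choose j : ℝ) * p^(n+1-j) * q^j * g j) (n+1)
    rw [this, add_sub_cancel_right]
    exact Finset.sum_congr rfl fun j _ => by rw [Nat.succ_sub_succ]
  have h4 : ∑ j ∈ range (n+2), (n.choose j : ℝ) * p^(n+1-j) * q^j * g j
      = ∑ j ∈ range (n+1), (n.choose j : ℝ) * p^(n+1-j) * q^j * g j := by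
    rw [Finset.sum_range_succ]; simp
  have h5 : ∑ j ∈ range (n+1), (n.choose j : ℝ) * p^(n+1-j) * q^j * g j
      = p * ∑ j ∈ range (n+1), (n.choose j : ℝ) * p^(n-j) * q^j * g j := by
    rw [Finset.mul_sum]
    apply Finset.sum_congr rfl
    intro j hj
    simp only [Finset.mem_range] at hj
    have : n + 1 - j = (n - j) + 1 := by omega
    rw [this, pow_succ]; ring
  rw [h3, h4, h5]
  simp
  ring

lemma expand_pow (a : ℝ) (n k : ℕ) (c : ℝ) :
    ∑ j ∈ range (n+1), (n.choose j : ℝ) * ((1+a)/2)^(n-j) * ((1-a)/2)^j * (((n:ℝ) - 2*j) + c)^k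
      = ∑ i ∈ range (k+1), (k.choose i : ℝ) * c^(k-i) * Mm a n i := by
  unfold Mm
  have h : ∀ j ∈ range (n+1),
      (n.choose j : ℝ) * ((1+a)/2)^(n-j) * ((1-a)/2)^j * (((n:ℝ) - 2*j) + c)^k
      = ∑ i ∈ range (k+1), (k.choose i : ℝ) * c^(k-i) *
          ((n.choose j : ℝ) * ((1+a)/2)^(n-j) * ((1-a)/2)^j * ((n:ℝ) - 2*j)^i) := by
    intro j _
    rw [add_pow, Finset.mul_sum]
    exact Finset.sum_congr rfl fun i _ => by ring
  rw [Finset.sum_congr rfl h, Finset.sum_comm]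
  exact Finset.sum_congr rfl fun i _ => by rw [Finset.mul_sum]

lemma Mm_succ (a : ℝ) (n k : ℕ) :
    Mm a (n+1) k
      = ∑ i ∈ range (k+1), (k.choose i : ℝ) * (if Even (k-i) then 1 else a) * Mm a n i := by
  have key := binom_step ((1+a)/2) ((1-a)/2) n (fun j => (((n+1:ℕ):ℝ) - 2*j)^k)
  have lhs_eq : Mm a (n+1) k
      = ∑ j ∈ range (n+2), ((n+1).choose j : ℝ) * ((1+a)/2)^(n+1-j) * ((1-a)/2)^j
          * (((n+1:ℕ):ℝ) - 2*j)^k := rfl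
  rw [lhs_eq, key]
  have e1 : ∑ j ∈ range (n+1), (n.choose j : ℝ) * ((1+a)/2)^(n-j) * ((1-a)/2)^j
        * (((n+1:ℕ):ℝ) - 2*(j:ℝ))^k
      = ∑ i ∈ range (k+1), (k.choose i : ℝ) * (1:ℝ)^(k-i) * Mm a n i := by
    rw [← expand_pow a n k 1]
    apply Finset.sum_congr rfl
    intro j _
    push_cast
    ring_nf
  have e2 : ∑ j ∈ range (n+1), (n.choose j : ℝ) * ((1+a)/2)^(n-j) * ((1-a)/2)^j
        * (((n+1:ℕ):ℝ) - 2*((j:ℝ)+1))^k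
      = ∑ i ∈ range (k+1), (k.choose i : ℝ) * (-1:ℝ)^(k-i) * Mm a n i := by
    rw [← expand_pow a n k (-1)]
    apply Finset.sum_congr rfl
    intro j _
    push_cast
    ring_nf
  simp only [Nat.cast_add, Nat.cast_one] at e1 e2 ⊢
  push_cast at e1 e2 ⊢
  rw [e1, e2, Finset.mul_sum, Finset.mul_sum, ← Finset.sum_add_distrib]
  apply Finset.sum_congr rfl
  intro i _
  rcases Nat.even_or_odd (k - i) with he | ho
  · rw [if_pos he, Even.neg_one_pow he, one_pow]
    ring
  · rw [if_neg (Nat.not_even_iff_odd.mpr ho), Odd.neg_one_pow ho, one_pow]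
    ring

lemma Mm_bounds (a : ℝ) (ha : 1 ≤ a) (n : ℕ) : ∀ k,
    (n.choose k : ℝ) * (k.factorial : ℝ) * a^k ≤ Mm a n k ∧ Mm a n k ≤ (n:ℝ)^k * a^k := by
  have ha0 : (0:ℝ) < a := lt_of_lt_of_le one_pos ha
  induction n with
  | zero =>
    intro k
    have h0 : Mm a 0 k = (0:ℝ)^k := by simp [Mm]
    cases k with
    | zero => simp [h0]
    | succ m => simp [h0, Nat.choose_eq_zero_of_lt (Nat.succ_pos m)]
  | succ n ih =>
    have hMnonneg : ∀ i, 0 ≤ Mm a n i := fun i =>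
      le_trans (by positivity) (ih i).1
    intro k
    constructor
    · -- lower bound
      rw [Mm_succ]
      cases k with
      | zero =>
        simp only [Nat.choose_zero_right, Nat.factorial_zero, pow_zero, Nat.cast_one,
          one_mul, mul_one, range_one, Finset.sum_singleton, Nat.choose_self]
        have := (ih 0).1
        simpa using this
      | succ m =>
        rw [Finset.sum_range_succ, Finset.sum_range_succ]
        have t1 : (0:ℝ) ≤ ∑ i ∈ range m, ((m+1).choose i : ℝ)
            * (if Even (m+1-i) then (1:ℝ) else a) * Mm a n i := by
          apply Finset.sum_nonneg
          intro i _
          have hwi : (0:ℝ) ≤ (if Even (m+1-i) then (1:ℝ) else a) := by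
            split <;> linarith
          exact mul_nonneg (mul_nonneg (by positivity) hwi) (hMnonneg i)
        have t2 : ((n:ℕ).choose m : ℝ) * ((m+1).factorial : ℝ) * a^(m+1)
            ≤ ((m+1).choose m : ℝ) * (if Even (m+1-m) then (1:ℝ) else a) * Mm a n m := by
          have hsub : m + 1 - m = 1 := by omega
          rw [hsub]
          simp only [Nat.choose_succ_self_right, if_neg (by decide : ¬ Even 1)]
          have h1 := (ih m).1
          calc ((n:ℕ).choose m : ℝ) * ((m+1).factorial : ℝ) * a^(m+1)
              = ((m:ℝ)+1) * a * (((n:ℕ).choose m : ℝ) * (m.factorial : ℝ) * a^m) := by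
                rw [Nat.factorial_succ]; push_cast; ring
            _ ≤ ((m:ℝ)+1) * a * Mm a n m := by
                apply mul_le_mul_of_nonneg_left h1 (by positivity)
            _ = ((m+1:ℕ) : ℝ) * a * Mm a n m := by push_cast; ring
        have t3 : ((n:ℕ).choose (m+1) : ℝ) * ((m+1).factorial : ℝ) * a^(m+1)
            ≤ ((m+1).choose (m+1) : ℝ) * (if Even (m+1-(m+1)) then (1:ℝ) else a) * Mm a n (m+1) := by
          simp only [Nat.choose_self, Nat.sub_self, if_pos (Even.zero), Nat.cast_one, one_mul]
          have h1 := (ih (m+1)).1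
          nlinarith [h1]
        have hch : ((n+1).choose (m+1) : ℝ) = ((n:ℕ).choose m : ℝ) + ((n:ℕ).choose (m+1) : ℝ) := by
          rw [Nat.choose_succ_succ]; push_cast; ring
        calc ((n+1).choose (m+1) : ℝ) * ((m+1).factorial : ℝ) * a^(m+1)
            = ((n:ℕ).choose m : ℝ) * ((m+1).factorial : ℝ) * a^(m+1)
              + ((n:ℕ).choose (m+1) : ℝ) * ((m+1).factorial : ℝ) * a^(m+1) := by
              rw [hch]; ring
          _ ≤ _ := by linarith [t1, t2, t3]
    · -- upper bound
      rw [Mm_succ]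
      have step : ∀ i ∈ range (k+1), ((k).choose i : ℝ)
            * (if Even (k-i) then (1:ℝ) else a) * Mm a n i
          ≤ ((k).choose i : ℝ) * (n:ℝ)^i * a^k := by
        intro i hi
        simp only [Finset.mem_range] at hi
        have hik : i ≤ k := Nat.lt_succ_iff.mp hi
        have hwle : (if Even (k-i) then (1:ℝ) else a) ≤ a^(k-i) := by
          split_ifs with h
          · exact one_le_pow₀ ha
          · calc a = a^1 := (pow_one a).symm
              _ ≤ a^(k-i) := pow_le_pow_right₀ ha
                  (Nat.one_le_iff_ne_zero.mpr (fun h0 => h (h0 ▸ Even.zero)))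
        have hub := (ih i).2
        calc ((k).choose i : ℝ) * (if Even (k-i) then (1:ℝ) else a) * Mm a n i
            ≤ ((k).choose i : ℝ) * a^(k-i) * ((n:ℝ)^i * a^i) := by
              apply mul_le_mul
              · apply mul_le_mul_of_nonneg_left hwle (by positivity)
              · exact hub
              · exact hMnonneg i
              · positivity
          _ = ((k).choose i : ℝ) * (n:ℝ)^i * a^k := by
              have hpow : a^(k-i) * a^i = a^k := by
                rw [← pow_add]; congr 1; omega
              rw [← hpow]; ring
      calc ∑ i ∈ range (k+1), ((k).choose i : ℝ) * (if Even (k-i) then (1:ℝ) else a) * Mm a n i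
          ≤ ∑ i ∈ range (k+1), ((k).choose i : ℝ) * (n:ℝ)^i * a^k :=
            Finset.sum_le_sum step
        _ = ((n:ℝ)+1)^k * a^k := by
            rw [add_pow]
            rw [Finset.sum_mul]
            apply Finset.sum_congr rfl
            intro i _
            rw [one_pow]
            ring
        _ = ((n+1:ℕ):ℝ)^k * a^k := by push_cast; ring

lemma desc_div_tendsto (k : ℕ) :
    Tendsto (fun n : ℕ => ((n.choose k : ℝ) * (k.factorial : ℝ)) / (n:ℝ)^k) atTop (nhds 1) := by
  have hlim : Tendsto (fun n : ℕ => ∏ i ∈ range k, (1 - (i:ℝ)/(n:ℝ))) atTop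
      (nhds (∏ _i ∈ range k, (1:ℝ))) := by
    apply tendsto_finset_prod
    intro i _
    have h0 : Tendsto (fun n : ℕ => (i:ℝ)/(n:ℝ)) atTop (nhds 0) :=
      tendsto_const_div_atTop_nhds_zero_nat (i:ℝ)
    have := (tendsto_const_nhds (x := (1:ℝ)) (f := atTop (α := ℕ))).sub h0
    simpa using this
  simp only [Finset.prod_const_one] at hlim
  apply hlim.congr'
  filter_upwards [eventually_ge_atTop (k+1)] with n hn
  have hn0 : (n:ℝ) ≠ 0 := by
    have : 0 < n := by omega
    positivity
  have hdesc : (n.choose k : ℝ) * (k.factorial : ℝ) = ((n.descFactorial k : ℕ) : ℝ) := by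
    rw [Nat.descFactorial_eq_factorial_mul_choose]
    push_cast; ring
  rw [hdesc, Nat.descFactorial_eq_prod_range]
  rw [Nat.cast_prod]
  rw [show (n:ℝ)^k = ∏ _i ∈ range k, (n:ℝ) from by
    rw [Finset.prod_const, Finset.card_range]]
  rw [← Finset.prod_div_distrib]
  apply Finset.prod_congr rfl
  intro i hi
  simp only [Finset.mem_range] at hi
  have hcast : ((n - i : ℕ) : ℝ) = (n:ℝ) - (i:ℝ) := by
    have : i ≤ n := by omega
    push_cast [this]; ring
  rw [hcast]
  field_simp

lemma Mm_div_tendsto (a : ℝ) (ha : 1 ≤ a) (k : ℕ) :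
    Tendsto (fun n : ℕ => Mm a n k / (n:ℝ)^k) atTop (nhds (a^k)) := by
  have ha0 : (0:ℝ) < a := lt_of_lt_of_le one_pos ha
  have hlow : Tendsto (fun n : ℕ => ((n.choose k : ℝ) * (k.factorial : ℝ)) / (n:ℝ)^k * a^k)
      atTop (nhds (a^k)) := by
    have := (desc_div_tendsto k).mul_const (a^k)
    simpa using this
  apply tendsto_of_tendsto_of_tendsto_of_le_of_le' hlow tendsto_const_nhds
  · filter_upwards [eventually_ge_atTop 1] with n hn
    have hnk : (0:ℝ) < (n:ℝ)^k := by positivity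
    rw [div_mul_eq_mul_div]
    gcongr
    exact (Mm_bounds a ha n k).1
  · filter_upwards [eventually_ge_atTop 1] with n hn
    have hnk : (0:ℝ) < (n:ℝ)^k := by positivity
    rw [div_le_iff₀ hnk]
    calc Mm a n k ≤ (n:ℝ)^k * a^k := (Mm_bounds a ha n k).2
      _ = a^k * (n:ℝ)^k := by ring

/-- the complex moment sums -/
noncomputable def nu (a : ℝ) (k n : ℕ) : ℂ :=
  ∑ j ∈ range (n+1), Ccoef n j a * ((1:ℂ) - 2*(j:ℂ)/(n:ℂ))^k

lemma nu_eq (a : ℝ) (k n : ℕ) (hn : 1 ≤ n) :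
    nu a k n = ((Mm a n k / (n:ℝ)^k : ℝ) : ℂ) := by
  have hn0 : (n:ℝ) ≠ 0 := by positivity
  have hn0' : (n:ℂ) ≠ 0 := by exact_mod_cast Nat.cast_ne_zero.mpr (by omega)
  unfold nu Mm
  rw [Finset.sum_div, Complex.ofReal_sum]
  apply Finset.sum_congr rfl
  intro j _
  rw [Ccoef]
  push_cast
  have hx : (1:ℂ) - 2*(j:ℂ)/(n:ℂ) = ((n:ℂ) - 2*(j:ℂ))/(n:ℂ) := by field_simp
  rw [hx, div_pow]
  field_simp
  rw [mul_assoc _ ((((n:ℂ) - 2*(j:ℂ))/(n:ℂ))^k), ← mul_pow (((n:ℂ) - 2*(j:ℂ))/(n:ℂ)), div_mul_cancel₀ _ hn0']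

lemma nu_zero (a : ℝ) (k : ℕ) : nu a k 0 = 1 := by
  simp [nu, Ccoef]

lemma nu_norm_le (a : ℝ) (ha : 1 ≤ a) (k n : ℕ) : ‖nu a k n‖ ≤ a^k := by
  rcases Nat.eq_zero_or_pos n with rfl | hn
  · rw [nu_zero]
    simpa using one_le_pow₀ ha
  · rw [nu_eq a k n hn]
    rw [Complex.norm_real]
    rw [Real.norm_eq_abs]
    have hnk : (0:ℝ) < (n:ℝ)^k := by positivity
    have h1 := (Mm_bounds a ha n k).1
    have h2 := (Mm_bounds a ha n k).2
    have hML : (0:ℝ) ≤ Mm a n k := le_trans (by positivity) h1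
    rw [_root_.abs_of_nonneg (div_nonneg hML hnk.le)]
    rw [div_le_iff₀ hnk]
    calc Mm a n k ≤ (n:ℝ)^k * a^k := h2
      _ = a^k * (n:ℝ)^k := by ring

lemma nu_tendsto (a : ℝ) (ha : 1 ≤ a) (k : ℕ) :
    Tendsto (fun n : ℕ => nu a k n) atTop (nhds ((a:ℂ)^k)) := by
  have h := (Mm_div_tendsto a ha k)
  have h2 : Tendsto (fun n : ℕ => ((Mm a n k / (n:ℝ)^k : ℝ) : ℂ)) atTop (nhds ((a^k : ℝ) : ℂ)) :=
    (Complex.continuous_ofReal.tendsto _).comp h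
  rw [Complex.ofReal_pow] at h2
  apply h2.congr'
  filter_upwards [eventually_ge_atTop 1] with n hn
  exact (nu_eq a k n hn).symm

lemma exp_tsum' (z : ℂ) : Complex.exp z = ∑' m : ℕ, z ^ m / (m.factorial : ℂ) := by
  rw [Complex.exp_eq_exp_ℂ, NormedSpace.exp_eq_tsum_div]

lemma pow_combine {R : Type*} [Field R] (w : R) (m i : ℕ) (hi : i ≤ m) :
    w^i * (w^2)^(m-i) = w^(2*m-i) := by
  rw [← pow_mul, ← pow_add]
  congr 1
  omega

lemma binom_expand_z {R : Type*} [Field R] (u w : R) (m : ℕ) :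
    (u*w - w^2/2)^m = ∑ i ∈ range (m+1),
      u^i * (-(1/2) : R)^(m-i) * (m.choose i : R) * w^(2*m-i) := by
  have h : u*w - w^2/2 = u*w + (-(1/2) : R)*w^2 := by ring
  rw [h, add_pow]
  apply Finset.sum_congr rfl
  intro i hi
  simp only [Finset.mem_range] at hi
  rw [mul_pow, mul_pow, ← pow_combine w m i (by omega)]
  ring

lemma main_one (a : ℝ) (ha : 1 < a) (l : ℝ) :
    Tendsto (fun n : ℕ =>
        ∑ j ∈ Finset.range (n + 1),
          Ccoef n j a *
            Complex.exp ((l : ℂ) * ((1 : ℂ) - 2 * (j : ℂ) / (n : ℂ)) -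
              ((1 : ℂ) - 2 * (j : ℂ) / (n : ℂ)) ^ 2 / 2))
      atTop (nhds (Complex.exp (-(a : ℂ) ^ 2 / 2 + (a : ℂ) * (l : ℂ)))) := by
  have ha1 : (1:ℝ) ≤ a := ha.le
  have ha0 : (0:ℝ) < a := by linarith
  set f : ℕ → ℕ → ℂ := fun n m =>
    (∑ i ∈ range (m+1), (l:ℂ)^i * (-(1/2) : ℂ)^(m-i) * (m.choose i : ℂ) * nu a (2*m-i) n)
      / (m.factorial : ℂ) with hfdef
  set b : ℝ := |l| * a + a ^ 2 / 2 with hbdef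
  have h12 : ‖(-(1/2) : ℂ)‖ = (1/2 : ℝ) := by
    rw [norm_neg]
    simp
  -- bound
  have hfb : ∀ n m, ‖f n m‖ ≤ b^m / (m.factorial : ℝ) := by
    intro n m
    rw [hfdef]
    simp only []
    rw [norm_div, Complex.norm_natCast]
    have hnum : ‖∑ i ∈ range (m+1), (l:ℂ)^i * (-(1/2) : ℂ)^(m-i) * (m.choose i : ℂ)
        * nu a (2*m-i) n‖ ≤ b^m := by
      calc ‖∑ i ∈ range (m+1), (l:ℂ)^i * (-(1/2) : ℂ)^(m-i) * (m.choose i : ℂ)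
            * nu a (2*m-i) n‖
          ≤ ∑ i ∈ range (m+1), |l|^i * (1/2:ℝ)^(m-i) * (m.choose i : ℝ) * a^(2*m-i) := by
            refine (norm_sum_le _ _).trans (Finset.sum_le_sum ?_)
            intro i hi
            rw [norm_mul, norm_mul, norm_mul, norm_pow, norm_pow, Complex.norm_real,
              Complex.norm_natCast, h12]
            gcongr
            · exact (Real.norm_eq_abs l).le
            · exact nu_norm_le a ha1 _ n
        _ = b^m := by
            rw [hbdef, add_pow]
            apply Finset.sum_congr rfl
            intro i hi
            simp only [Finset.mem_range] at hi
            rw [← pow_combine a m i (by omega)]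
            ring
    have hm0 : (0:ℝ) ≤ (m.factorial : ℝ) := by positivity
    gcongr
  -- limits
  have hflim : ∀ m, Tendsto (fun n => f n m) atTop
      (nhds (((l:ℂ) * (a:ℂ) - (a:ℂ)^2/2)^m / (m.factorial : ℂ))) := by
    intro m
    have hsum : Tendsto (fun n => ∑ i ∈ range (m+1),
        (l:ℂ)^i * (-(1/2) : ℂ)^(m-i) * (m.choose i : ℂ) * nu a (2*m-i) n) atTop
        (nhds (∑ i ∈ range (m+1),
          (l:ℂ)^i * (-(1/2) : ℂ)^(m-i) * (m.choose i : ℂ) * (a:ℂ)^(2*m-i))) := by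
      apply tendsto_finset_sum
      intro i _
      exact (nu_tendsto a ha1 (2*m-i)).const_mul _
    have hval : (∑ i ∈ range (m+1), (l:ℂ)^i * (-(1/2) : ℂ)^(m-i) * (m.choose i : ℂ)
        * (a:ℂ)^(2*m-i)) = ((l:ℂ) * (a:ℂ) - (a:ℂ)^2/2)^m := (binom_expand_z (l:ℂ) (a:ℂ) m).symm
    rw [← hval]
    exact hsum.div_const _
  have hgsum : Summable (fun m : ℕ => b^m / (m.factorial : ℝ)) :=
    Real.summable_pow_div_factorial b
  have hmain := tendsto_tsum_of_dominated_convergence hgsum hflim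
    (Eventually.of_forall (fun n m => hfb n m))
  -- identify partial sums
  have hS : ∀ n : ℕ, (∑' m : ℕ, f n m)
      = ∑ j ∈ Finset.range (n + 1), Ccoef n j a *
          Complex.exp ((l : ℂ) * ((1 : ℂ) - 2 * (j : ℂ) / (n : ℂ)) -
            ((1 : ℂ) - 2 * (j : ℂ) / (n : ℂ)) ^ 2 / 2) := by
    intro n
    have hswap : ∀ m : ℕ, f n m = ∑ j ∈ range (n+1),
        Ccoef n j a * ((l:ℂ) * ((1:ℂ) - 2*(j:ℂ)/(n:ℂ)) - ((1:ℂ) - 2*(j:ℂ)/(n:ℂ))^2/2)^m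
          / (m.factorial : ℂ) := by
      intro m
      rw [hfdef]
      simp only []
      rw [← Finset.sum_div]
      congr 1
      have : ∀ i ∈ range (m+1), (l:ℂ)^i * (-(1/2) : ℂ)^(m-i) * (m.choose i : ℂ) * nu a (2*m-i) n
          = ∑ j ∈ range (n+1), Ccoef n j a *
              ((l:ℂ)^i * (-(1/2) : ℂ)^(m-i) * (m.choose i : ℂ)
                * ((1:ℂ) - 2*(j:ℂ)/(n:ℂ))^(2*m-i)) := by
        intro i _
        rw [nu, Finset.mul_sum]
        exact Finset.sum_congr rfl fun j _ => by ring
      rw [Finset.sum_congr rfl this, Finset.sum_comm]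
      apply Finset.sum_congr rfl
      intro j _
      rw [← Finset.mul_sum, binom_expand_z]
    calc (∑' m : ℕ, f n m)
        = ∑' m : ℕ, ∑ j ∈ range (n+1), Ccoef n j a *
            ((l:ℂ) * ((1:ℂ) - 2*(j:ℂ)/(n:ℂ)) - ((1:ℂ) - 2*(j:ℂ)/(n:ℂ))^2/2)^m
              / (m.factorial : ℂ) := by
          exact tsum_congr hswap
      _ = ∑ j ∈ range (n+1), ∑' m : ℕ, Ccoef n j a *
            ((l:ℂ) * ((1:ℂ) - 2*(j:ℂ)/(n:ℂ)) - ((1:ℂ) - 2*(j:ℂ)/(n:ℂ))^2/2)^m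
              / (m.factorial : ℂ) := by
          apply Summable.tsum_finsetSum
          intro j _
          have hsumz := NormedSpace.expSeries_div_summable
            ((l:ℂ) * ((1:ℂ) - 2*(j:ℂ)/(n:ℂ)) - ((1:ℂ) - 2*(j:ℂ)/(n:ℂ))^2/2)
          have := hsumz.mul_left (Ccoef n j a)
          exact this.congr fun m => (mul_div_assoc _ _ _).symm
      _ = ∑ j ∈ Finset.range (n + 1), Ccoef n j a *
            Complex.exp ((l : ℂ) * ((1 : ℂ) - 2 * (j : ℂ) / (n : ℂ)) -
              ((1 : ℂ) - 2 * (j : ℂ) / (n : ℂ)) ^ 2 / 2) := by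
          apply Finset.sum_congr rfl
          intro j _
          rw [exp_tsum', ← tsum_mul_left]
          exact tsum_congr fun m => by rw [mul_div_assoc]
  have hlimval : (∑' m : ℕ, ((l:ℂ) * (a:ℂ) - (a:ℂ)^2/2)^m / (m.factorial : ℂ))
      = Complex.exp (-(a : ℂ) ^ 2 / 2 + (a : ℂ) * (l : ℂ)) := by
    rw [← exp_tsum']
    congr 1
    ring
  rw [← hlimval]
  exact hmain.congr hS

theorem supershift_gaussian (a : ℝ) (ha : 1 < a) :
    (∀ l : ℝ,
      Tendsto (fun n : ℕ =>
          ∑ j ∈ Finset.range (n + 1),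
            Ccoef n j a *
              Complex.exp ((l : ℂ) * ((1 : ℂ) - 2 * (j : ℂ) / (n : ℂ)) -
                ((1 : ℂ) - 2 * (j : ℂ) / (n : ℂ)) ^ 2 / 2))
        atTop (nhds (Complex.exp (-(a : ℂ) ^ 2 / 2 + (a : ℂ) * (l : ℂ))))) ∧
    Tendsto (fun n : ℕ =>
        ∑ j ∈ Finset.range (n + 1),
          Ccoef n j a * Complex.exp (-((1 : ℂ) - 2 * (j : ℂ) / (n : ℂ)) ^ 2 / 2))
      atTop (nhds (Complex.exp (-(a : ℂ) ^ 2 / 2))) := by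
  constructor
  · exact fun l => main_one a ha l
  · have h0 := main_one a ha 0
    simpa only [Complex.ofReal_zero, mul_zero, add_zero, zero_mul, zero_sub, neg_div] using h0
end
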